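/- arXiv:1907.09563 — 2 statements merged into one kernel-verified Lean document; each statement's English description precedes it below -/
import Mathlib

section
/- If p and p' are distinct primes and s is a state of a deterministic transition graph from which both the language 1·(0^p)^* and the language 1·(0^{p'})^* are accepted (with suitable final-state sets), then the deterministic transition graph has at least p·p' states reachable from s by a word in 1·0^*, assuming the 0-successors of the 1-successor of s form a single cycle; more precisely, the length of the 0-cycle reached after reading 1 from s must be divisible by p·p'. -/
/-! The word `1` and the word `1·0^ℓ` lead from `s` to the same state `t` of the cycle, so each
language accepts both or neither; as `1` is accepted, `1·0^ℓ` is accepted too, whence `p ∣ ℓ` and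
`p' ∣ ℓ`, and `p·p' ∣ ℓ` by coprimality. The states reached by `1·0^*` are exactly the `ℓ` distinct
states of the cycle. -/

/-- Run of a deterministic transition graph (partial transitions) over the
alphabet `{0,1}` (`false` is `0`, `true` is `1`). -/
def runW {Q : Type*} (δ : Q → Bool → Option Q) : List Bool → Q → Option Q
  | [], q => some q
  | a :: w, q => (δ q a).bind (runW δ w)

section

variable {Q : Type*} (δ : Q → Bool → Option Q)

theorem runW_append (w w' : List Bool) (q : Q) :
    runW δ (w ++ w') q = (runW δ w q).bind (runW δ w') := by
  induction w generalizing q with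
  | nil => rfl
  | cons a w ih =>
    simp only [List.cons_append, runW]
    cases δ q a <;> simp [ih]

theorem runW_cons_of_eq {q r : Q} {a : Bool} (h : δ q a = some r) (w : List Bool) :
    runW δ (a :: w) q = runW δ w r := by
  simp [runW, h]

variable {δ}

theorem runW_replicate_mul_of_cycle {ℓ : ℕ} {t : Q} {a : Bool}
    (hcycle : runW δ (List.replicate ℓ a) t = some t) (m : ℕ) :
    runW δ (List.replicate (ℓ * m) a) t = some t := by
  induction m with
  | zero => rfl
  | succ m ih => rw [Nat.mul_succ, List.replicate_add, runW_append, ih, Option.bind_some, hcycle]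

theorem runW_replicate_mod_of_cycle {ℓ : ℕ} {t : Q} {a : Bool}
    (hcycle : runW δ (List.replicate ℓ a) t = some t) (k : ℕ) :
    runW δ (List.replicate k a) t = runW δ (List.replicate (k % ℓ) a) t := by
  conv_lhs => rw [← Nat.div_add_mod k ℓ]
  rw [List.replicate_add, runW_append, runW_replicate_mul_of_cycle hcycle, Option.bind_some]

theorem dvd_of_accepts_replicate_mul {s : Q} {F : Set Q} {p ℓ : ℕ}
    (hlang : ∀ w : List Bool, (∃ q ∈ F, runW δ w s = some q) ↔
      ∃ k : ℕ, w = true :: List.replicate (k * p) false)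
    (hloop : runW δ (true :: List.replicate ℓ false) s = runW δ [true] s) : p ∣ ℓ := by
  obtain ⟨q, hqF, hq⟩ := (hlang [true]).mpr ⟨0, by simp⟩
  obtain ⟨k, hk⟩ := (hlang (true :: List.replicate ℓ false)).mp ⟨q, hqF, hloop.trans hq⟩
  have hlen : ℓ = k * p := by simpa using congrArg List.length hk
  exact ⟨k, hlen.trans (Nat.mul_comm k p)⟩

theorem ncard_reachable_of_simple_cycle {ℓ : ℕ} {t : Q} {a : Bool} (hℓ : 0 < ℓ)
    (hcycle : runW δ (List.replicate ℓ a) t = some t)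
    (hsimple : Function.Injective (fun i : Fin ℓ => runW δ (List.replicate (i : ℕ) a) t)) :
    {q : Q | ∃ k : ℕ, runW δ (List.replicate k a) t = some q}.ncard = ℓ := by
  set run := fun i : Fin ℓ => runW δ (List.replicate (i : ℕ) a) t
  have hdefined : ∀ i : Fin ℓ, run i ≠ none := by
    intro i hi
    have hsplit : List.replicate ℓ a = List.replicate i a ++ List.replicate (ℓ - i) a := by
      rw [← List.replicate_add, Nat.add_sub_cancel' i.is_lt.le]
    rw [hsplit, runW_append] at hcycle
    simp [run, hi] at hcycle
  have himage : Option.some '' {q : Q | ∃ k : ℕ, runW δ (List.replicate k a) t = some q}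
      = Set.range run := by
    ext o
    constructor
    · rintro ⟨q, ⟨k, hk⟩, rfl⟩
      exact ⟨⟨k % ℓ, Nat.mod_lt k hℓ⟩, (runW_replicate_mod_of_cycle hcycle k).symm.trans hk⟩
    · rintro ⟨i, rfl⟩
      obtain ⟨q, hq⟩ := Option.ne_none_iff_exists'.mp (hdefined i)
      exact ⟨q, ⟨i, hq⟩, hq.symm⟩
  rw [← Set.ncard_image_of_injective _ (Option.some_injective Q), himage,
    Set.ncard_range_of_injective hsimple, Nat.card_eq_fintype_card, Fintype.card_fin]

end

theorem stmt5_general {Q : Type*} (δ : Q → Bool → Option Q)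
    (p p' : ℕ) (hp : p.Prime) (hp' : p'.Prime) (hne : p ≠ p')
    (s t : Q) (F F' : Set Q)
    (hlangF : ∀ w : List Bool, (∃ q ∈ F, runW δ w s = some q) ↔
      ∃ k : ℕ, w = true :: List.replicate (k * p) false)
    (hlangF' : ∀ w : List Bool, (∃ q ∈ F', runW δ w s = some q) ↔
      ∃ k : ℕ, w = true :: List.replicate (k * p') false)
    (hst : δ s true = some t)
    (ℓ : ℕ) (hℓ : 0 < ℓ)
    (hcycle : runW δ (List.replicate ℓ false) t = some t)
    (hsimple : Function.Injective
      (fun i : Fin ℓ => runW δ (List.replicate (i : ℕ) false) t)) :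
    p * p' ∣ ℓ ∧
      p * p' ≤ Set.ncard
        {q : Q | ∃ k : ℕ, runW δ (true :: List.replicate k false) s = some q} := by
  have hloop : runW δ (true :: List.replicate ℓ false) s = runW δ [true] s := by
    rw [runW_cons_of_eq δ hst, runW_cons_of_eq δ hst, hcycle]
    rfl
  have hdvd : p * p' ∣ ℓ :=
    ((Nat.coprime_primes hp hp').mpr hne).mul_dvd_of_dvd_of_dvd
      (dvd_of_accepts_replicate_mul hlangF hloop) (dvd_of_accepts_replicate_mul hlangF' hloop)
  refine ⟨hdvd, ?_⟩
  simp only [runW_cons_of_eq δ hst]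
  rw [ncard_reachable_of_simple_cycle hℓ hcycle hsimple]
  exact Nat.le_of_dvd hℓ hdvd

/-- If both `1·(0^p)^*` and `1·(0^{p'})^*` are accepted from a state `s` of a
deterministic transition graph (with suitable final-state sets), and after
reading `1` from `s` the `0`-successors form a single (simple) cycle of
length `ℓ`, then `p·p'` divides `ℓ` (so there are at least `p·p'` states
reachable from `s` by words in `1·0^*`). -/
theorem stmt5 {Q : Type*} [Fintype Q] (δ : Q → Bool → Option Q)
    (p p' : ℕ) (hp : p.Prime) (hp' : p'.Prime) (hne : p ≠ p')
    (s t : Q) (F F' : Set Q)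
    (hlangF : ∀ w : List Bool, (∃ q ∈ F, runW δ w s = some q) ↔
      ∃ k : ℕ, w = true :: List.replicate (k * p) false)
    (hlangF' : ∀ w : List Bool, (∃ q ∈ F', runW δ w s = some q) ↔
      ∃ k : ℕ, w = true :: List.replicate (k * p') false)
    (hst : δ s true = some t)
    (ℓ : ℕ) (hℓ : 0 < ℓ)
    (hcycle : runW δ (List.replicate ℓ false) t = some t)
    (hsimple : Function.Injective
      (fun i : Fin ℓ => runW δ (List.replicate (i : ℕ) false) t)) :
    p * p' ∣ ℓ ∧
      p * p' ≤ Set.ncard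
        {q : Q | ∃ k : ℕ, runW δ (true :: List.replicate k false) s = some q} :=
  stmt5_general δ p p' hp hp' hne s t F F' hlangF hlangF' hst ℓ hℓ hcycle hsimple
end

section
/- Given an immersion of size k for languages L₁,…,L_n over Σ_ℓ (a deterministic transition graph A with n sub-DFAs B₁,…,B_n such that L(Bᵢ) = Lᵢ), there exists a deterministic visibly pushdown automaton with k + 2 states accepting K = ⋃ᵢ cᵢ Lᵢ r over the visibly pushdown alphabet with calls {c₁,…,c_n}, returns {r}, and internals Σ_ℓ. -/
namespace Stmt13

/-- The visibly pushdown alphabet: call symbols `c₁,…,c_n` (`Fin n`),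
internal symbols from `A`, and a single return symbol `r`. -/
abbrev Alph (n : ℕ) (A : Type) := Fin n ⊕ A ⊕ Unit

def call {n : ℕ} {A : Type} (i : Fin n) : Alph n A := Sum.inl i
def int {n : ℕ} {A : Type} (a : A) : Alph n A := Sum.inr (Sum.inl a)
def ret {n : ℕ} {A : Type} : Alph n A := Sum.inr (Sum.inr ())

/-- `K = ⋃ᵢ cᵢ Lᵢ r`. -/
def K {n : ℕ} {A : Type} (L : Fin n → Set (List A)) : Set (List (Alph n A)) :=
  {u | ∃ (i : Fin n) (w : List A), w ∈ L i ∧ u = call i :: w.map int ++ [ret]}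

/-- A deterministic VPA over the visibly pushdown alphabet `Alph n A`, with
state set `Q` and stack alphabet `Γ`: calls push, returns pop, internal
transitions leave the stack unchanged. -/
structure VPA (n : ℕ) (A Q Γ : Type) where
  δc : Q → Fin n → Option (Q × Γ)
  δr : Q → Γ → Option Q
  δi : Q → A → Option Q
  init : Q
  final : Set Q

/-- Run of a deterministic VPA on a word, from a configuration
(state, stack); the top of stack is the head of the list. -/
def run {n : ℕ} {A Q Γ : Type} (M : VPA n A Q Γ) :
    List (Alph n A) → Q × List Γ → Option (Q × List Γ)
  | [], c => some c
  | Sum.inl i :: w, (q, σ) =>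
      (M.δc q i).bind (fun p => run M w (p.1, p.2 :: σ))
  | Sum.inr (Sum.inl a) :: w, (q, σ) =>
      (M.δi q a).bind (fun q' => run M w (q', σ))
  | Sum.inr (Sum.inr _) :: w, (q, σ) =>
      match σ with
      | [] => none
      | γ :: σ' => (M.δr q γ).bind (fun q' => run M w (q', σ'))

/-- Acceptance: from the initial state with empty stack, the run reaches a
final state (the stack need not be empty). -/
def Accepts {n : ℕ} {A Q Γ : Type} (M : VPA n A Q Γ) (w : List (Alph n A)) : Prop :=
  ∃ c : Q × List Γ, run M w (M.init, []) = some c ∧ c.1 ∈ M.final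

/-- Run of a deterministic transition graph (partial function) on internal words. -/
def runW {Q A : Type} (δ : Q → A → Option Q) : List A → Q → Option Q
  | [], q => some q
  | a :: w, q => (δ q a).bind (runW δ w)

section Aux

variable {n : ℕ} {A Q : Type} (δ : Q → A → Option Q) (inits : Fin n → Q)
  (finals : Fin n → Set Q)

open Classical in
/-- The constructed VPA. -/
noncomputable def mkM : VPA n A (Q ⊕ Bool) (Fin n) where
  δc q i := match q with
    | Sum.inr false => some (Sum.inl (inits i), i)
    | _ => none
  δr q i := match q with
    | Sum.inl p => if p ∈ finals i then some (Sum.inr true) else none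
    | _ => none
  δi q a := match q with
    | Sum.inl p => (δ p a).map Sum.inl
    | _ => none
  init := Sum.inr false
  final := {Sum.inr true}

open Classical

@[simp] lemma mkM_δc_init (i : Fin n) :
    (mkM δ inits finals).δc (Sum.inr false) i = some (Sum.inl (inits i), i) := rfl
@[simp] lemma mkM_δc_inl (q : Q) (i : Fin n) :
    (mkM δ inits finals).δc (Sum.inl q) i = none := rfl
@[simp] lemma mkM_δc_true (i : Fin n) :
    (mkM δ inits finals).δc (Sum.inr true) i = none := rfl
@[simp] lemma mkM_δi_inl (q : Q) (a : A) :
    (mkM δ inits finals).δi (Sum.inl q) a = (δ q a).map Sum.inl := rfl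
@[simp] lemma mkM_δi_inr (b : Bool) (a : A) :
    (mkM δ inits finals).δi (Sum.inr b) a = none := by cases b <;> rfl
@[simp] lemma mkM_δr_inl (q : Q) (i : Fin n) :
    (mkM δ inits finals).δr (Sum.inl q) i =
      if q ∈ finals i then some (Sum.inr true) else none := rfl
@[simp] lemma mkM_δr_inr (b : Bool) (i : Fin n) :
    (mkM δ inits finals).δr (Sum.inr b) i = none := by cases b <;> rfl
@[simp] lemma mkM_init : (mkM δ inits finals).init = Sum.inr false := rfl
@[simp] lemma mkM_final : (mkM δ inits finals).final = {Sum.inr true} := rfl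

lemma run_int (w : List A) : ∀ (q : Q) (σ : List (Fin n)),
    run (mkM δ inits finals) (w.map int) (Sum.inl q, σ) =
      (runW δ w q).map (fun p => (Sum.inl p, σ)) := by
  induction w with
  | nil => intro q σ; simp [run, runW]
  | cons a w ih =>
    intro q σ
    simp only [List.map_cons, int, run, runW, mkM_δi_inl]
    cases δ q a with
    | none => simp
    | some q' => simp [ih]

lemma run_dead : ∀ (u : List (Alph n A)) (σ : List (Fin n)) c,
    run (mkM δ inits finals) u (Sum.inr true, σ) = some c → u = [] := by
  intro u σ c h
  cases u with
  | nil => rfl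
  | cons a u =>
    rcases a with i | a | x
    · simp [run] at h
    · simp [run] at h
    · cases σ with
      | nil => simp [run] at h
      | cons γ σ' => simp [run] at h

lemma accept_from : ∀ (u : List (Alph n A)) (q : Q) (i : Fin n) c,
    run (mkM δ inits finals) u (Sum.inl q, [i]) = some c →
    c.1 ∈ (mkM δ inits finals).final →
    ∃ (w : List A) (qf : Q), u = w.map int ++ [ret] ∧ qf ∈ finals i ∧
      runW δ w q = some qf := by
  intro u
  induction u with
  | nil =>
    intro q i c hrun hfin
    simp [run] at hrun
    subst hrun
    simp at hfin
  | cons a u ih =>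
    intro q i c hrun hfin
    rcases a with j | a | x
    · simp [run] at hrun
    · simp only [run, mkM_δi_inl] at hrun
      cases hδ : δ q a with
      | none => rw [hδ] at hrun; simp at hrun
      | some q' =>
        rw [hδ] at hrun; simp only [Option.map_some, Option.bind_some] at hrun
        obtain ⟨w, qf, hu, hqf, hw⟩ := ih q' i c hrun hfin
        exact ⟨a :: w, qf, by simp [hu, int], hqf, by simp [runW, hδ, hw]⟩
    · simp only [run, mkM_δr_inl] at hrun
      by_cases hq : q ∈ finals i
      · rw [if_pos hq] at hrun
        simp only [Option.bind_some] at hrun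
        have := run_dead δ inits finals u [] c hrun
        subst this
        exact ⟨[], q, by simp [ret], hq, rfl⟩
      · rw [if_neg hq] at hrun; simp at hrun

lemma run_append (u v : List (Alph n A)) {Q' Γ : Type} (M : VPA n A Q' Γ) :
    ∀ c, run M (u ++ v) c = (run M u c).bind (run M v) := by
  induction u with
  | nil => intro c; simp [run]
  | cons a u ih =>
    intro c
    obtain ⟨q, σ⟩ := c
    rcases a with j | a | x
    · simp only [List.cons_append, run]
      cases M.δc q j <;> simp [ih]
    · simp only [List.cons_append, run]
      cases M.δi q a <;> simp [ih]
    · simp only [List.cons_append, run]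
      cases σ with
      | nil => simp
      | cons γ σ' =>
        cases hδ : M.δr q γ <;> simp [hδ, ih]

end Aux

/-- From an immersion of size `k` for `L₁,…,L_n` one obtains a deterministic
VPA with `k + 2` states accepting `K = ⋃ᵢ cᵢ Lᵢ r`. -/
theorem stmt13 {n : ℕ} {A : Type} (L : Fin n → Set (List A))
    (Q : Type) [Fintype Q] (k : ℕ) (hk : Fintype.card Q = k)
    (δ : Q → A → Option Q) (inits : Fin n → Q) (finals : Fin n → Set Q)
    (hL : ∀ (i : Fin n) (w : List A),
      (∃ q ∈ finals i, runW δ w (inits i) = some q) ↔ w ∈ L i) :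
    ∃ (Q' : Type) (inst : Fintype Q') (Γ : Type) (M : VPA n A Q' Γ),
      @Fintype.card Q' inst = k + 2 ∧
      ∀ w : List (Alph n A), Accepts M w ↔ w ∈ K L := by
  refine ⟨Q ⊕ Bool, inferInstance, Fin n, mkM δ inits finals, by simp [hk], ?_⟩
  intro u
  constructor
  · rintro ⟨c, hrun, hfin⟩
    cases u with
    | nil =>
      simp [run] at hrun
      subst hrun
      simp at hfin
    | cons a u =>
      rcases a with i | a | x
      · have h0 : run (mkM δ inits finals) (Sum.inl i :: u) ((mkM δ inits finals).init, []) =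
            run (mkM δ inits finals) u (Sum.inl (inits i), [i]) := rfl
        rw [h0] at hrun
        obtain ⟨w, qf, hu, hqf, hw⟩ := accept_from δ inits finals u (inits i) i c hrun hfin
        exact ⟨i, w, (hL i w).1 ⟨qf, hqf, hw⟩, by simp [hu, call]⟩
      · simp [run] at hrun
      · simp [run] at hrun
  · rintro ⟨i, w, hw, rfl⟩
    obtain ⟨qf, hqf, hrunW⟩ := (hL i w).2 hw
    refine ⟨(Sum.inr true, []), ?_, by simp⟩
    have h0 : run (mkM δ inits finals) (call i :: (w.map int ++ [ret]))
        ((mkM δ inits finals).init, []) =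
        run (mkM δ inits finals) (w.map int ++ [ret]) (Sum.inl (inits i), [i]) := rfl
    rw [show call i :: w.map int ++ [ret] = call i :: (w.map int ++ [ret]) by simp, h0,
      run_append, run_int, hrunW]
    have hlast : run (mkM δ inits finals) [ret] (Sum.inl qf, [i]) = some (Sum.inr true, []) := by
      simp [ret, run, hqf]
    simp [hlast]

end Stmt13
end
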